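/- Let C be an abelian category and M an object of finite length N with simple composition factors M_1, …, M_N. Suppose D : C → C is an exact contravariant functor (duality) such that D(S) is injective in C for every simple object S appearing as a composition factor of M. Then D(M) is isomorphic to the direct sum ⨁_{i=1}^N D(M_i). -/

import Mathlib

/-!
Applying the exact contravariant functor `D` to `0 → F i → F (i+1) → R i → 0` gives a short exact
sequence `0 → D (R i) → D (F (i+1)) → D (F i) → 0`, which splits because `D (R i)` is injective.
Hence `D (F (i+1)) ≅ D (R i) ⊞ D (F i)`, and induction along the filtration gives the claim.
-/

open CategoryTheory CategoryTheory.Limits Opposite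

attribute [local instance] CategoryTheory.Abelian.hasFiniteBiproducts

noncomputable def biproductFinSuccIso {C : Type*} [Category C] [Preadditive C]
    [HasFiniteBiproducts C] [HasBinaryBiproducts C] {n : ℕ} (h : Fin (n + 1) → C) :
    (⨁ h) ≅ h (Fin.last n) ⊞ ⨁ (fun i : Fin n => h i.castSucc) :=
  biprod.uniqueUpToIso _ _ <| isBinaryBilimitOfTotal
    { pt := ⨁ h
      fst := biproduct.π h (Fin.last n)
      snd := biproduct.lift fun i : Fin n => biproduct.π h i.castSucc
      inl := biproduct.ι h (Fin.last n)
      inr := biproduct.desc fun i : Fin n => biproduct.ι h i.castSucc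
      inl_snd := by ext; simp [(Fin.castSucc_lt_last _).ne']
      inr_fst := by ext; simp [(Fin.castSucc_lt_last _).ne]
      inr_snd := by ext; simp [biproduct.ι_π] }
    (by simp [biproduct.lift_desc, ← biproduct.total, Fin.sum_univ_castSucc, add_comm])

section

variable {C A : Type*} [Category C] [Abelian C] [Category A] [Abelian A]
  (D : Cᵒᵖ ⥤ A) [PreservesFiniteLimits D] [PreservesFiniteColimits D]

noncomputable def CategoryTheory.ShortComplex.ShortExact.dualIsoBiprodOfInjective
    {S : ShortComplex C} (hS : S.ShortExact) [Injective (D.obj (Opposite.op S.X₃))] :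
    D.obj (Opposite.op S.X₂) ≅ D.obj (Opposite.op S.X₃) ⊞ D.obj (Opposite.op S.X₁) :=
  have : Injective (S.op.map D).X₁ := ‹_›
  (hS.op.map_of_exact D).splittingOfInjective.isoBinaryBiproduct

noncomputable def dualIsoBiproductOfFiltration : (N : ℕ) → (F : Fin (N + 1) → C) →
    (f : ∀ i : Fin N, F i.castSucc ⟶ F i.succ) → [∀ i, Mono (f i)] → IsZero (F 0) →
    (∀ i, Injective (D.obj (op (cokernel (f i))))) →
    (D.obj (op (F (Fin.last N))) ≅ ⨁ fun i => D.obj (op (cokernel (f i))))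
  | 0, _, _, _, hF0, _ =>
    (D.map_isZero hF0.op).iso ((IsZero.iff_id_eq_zero _).2 (biproduct.hom_ext _ _ finZeroElim))
  | N + 1, F, f, _, hF0, hinj =>
    have := hinj (Fin.last N)
    have hS := ShortComplex.ShortExact.mk' (ShortComplex.exact_cokernel (f (Fin.last N)))
      inferInstance inferInstance
    hS.dualIsoBiprodOfInjective D ≪≫
      biprod.mapIso (Iso.refl _) (dualIsoBiproductOfFiltration N (fun i => F i.castSucc)
        (fun i => f i.castSucc) hF0 (fun i => hinj i.castSucc)) ≪≫
      (biproductFinSuccIso fun i => D.obj (op (cokernel (f i)))).symm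

end

theorem dual_iso_biproduct_of_injective_dual_constituents_general
    {C : Type*} [Category C] [Abelian C]
    (D : Cᵒᵖ ⥤ C) [PreservesFiniteLimits D] [PreservesFiniteColimits D]
    (N : ℕ) (F : Fin (N + 1) → C) (f : ∀ i : Fin N, F i.castSucc ⟶ F i.succ)
    [∀ i, Mono (f i)]
    (hF0 : IsZero (F 0))
    (M : C) (hM : F (Fin.last N) ≅ M)
    (hinj : ∀ i : Fin N, Injective (D.obj (Opposite.op (cokernel (f i))))) :
    Nonempty (D.obj (Opposite.op M) ≅ ⨁ fun i : Fin N => D.obj (Opposite.op (cokernel (f i)))) :=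
  ⟨D.mapIso hM.op ≪≫ dualIsoBiproductOfFiltration D N F f hF0 hinj⟩

/-- Let `M` be an object of an abelian category of finite length `N`, presented by a
filtration `0 ≅ F 0 ↪ F 1 ↪ ⋯ ↪ F N = M` whose successive quotients (the composition
factors) are simple.  Let `D : Cᵒᵖ ⥤ C` be an exact contravariant functor such that
`D (R i)` is injective for every composition factor `R i = coker (F i ↪ F (i+1))`.
Then `D M ≅ ⨁ᵢ D (R i)`. -/
theorem dual_iso_biproduct_of_injective_dual_constituents
    {C : Type*} [Category C] [Abelian C]
    (D : Cᵒᵖ ⥤ C) [PreservesFiniteLimits D] [PreservesFiniteColimits D]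
    (N : ℕ) (F : Fin (N + 1) → C) (f : ∀ i : Fin N, F i.castSucc ⟶ F i.succ)
    [∀ i, Mono (f i)]
    (hF0 : IsZero (F 0))
    (M : C) (hM : F (Fin.last N) ≅ M)
    (hsimple : ∀ i : Fin N, Simple (cokernel (f i)))
    (hinj : ∀ i : Fin N, Injective (D.obj (Opposite.op (cokernel (f i))))) :
    Nonempty (D.obj (Opposite.op M) ≅ ⨁ fun i : Fin N => D.obj (Opposite.op (cokernel (f i)))) :=
  dual_iso_biproduct_of_injective_dual_constituents_general D N F f hF0 M hM hinj
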